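/- The Rolewicz operator T = αB on ℓ^p(ℕ), with |α| > 1 and 1 ≤ p < ∞, has infinite Bowen topological entropy. -/

import Mathlib

open scoped ENNReal

open Filter Topology

section Defs
variable {Y : Type*} [PseudoMetricSpace Y]

/-- A finite set `E` is `(n, ε)`-separated for the map `f`. -/
def IsSep (f : Y → Y) (n : ℕ) (ε : ℝ) (E : Finset Y) : Prop :=
  ∀ x ∈ E, ∀ y ∈ E, x ≠ y → ∃ i < n, ε < dist (f^[i] x) (f^[i] y)

/-- Maximal cardinality of an `(n, ε)`-separated subset of `K`. -/
noncomputable def sepNum (f : Y → Y) (K : Set Y) (n : ℕ) (ε : ℝ) : ℕ :=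
  sSup {m : ℕ | ∃ E : Finset Y, ↑E ⊆ K ∧ IsSep f n ε E ∧ E.card = m}

/-- Bowen topological entropy of a (uniformly continuous) map on a metric space. -/
noncomputable def entBowen (f : Y → Y) : EReal :=
  ⨆ (K : Set Y) (_ : IsCompact K) (ε : ℝ) (_ : 0 < ε),
    limsup (fun n : ℕ => ((Real.log (sepNum f K n ε) / n : ℝ) : EReal)) atTop
end Defs

/-!
A digit sequence `t : ℕ → Fin m` is sent to the vector `∑ₖ tₖ α⁻ᵏ eₖ` of `ℓ^p`; this map is
continuous on the compact space of digit sequences, so its range `K` is compact. Since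
`Tⁱ` shifts by `i` and multiplies by `αⁱ`, the `0`-th coordinate of `Tⁱ (∑ₖ tₖ α⁻ᵏ eₖ)` is the digit
`tᵢ`. Hence sequences that differ among their first `n` digits give `(n, 1/2)`-separated points
of `K`, there are `mⁿ` of them, and the entropy is at least `log m` for every `m`.
-/
section Separated
variable {X : Type*} [PseudoMetricSpace X]

theorem TotallyBounded.exists_card_le_of_separated {S : Set X} (hS : TotallyBounded S) {ε : ℝ}
    (hε : 0 < ε) :
    ∃ N : ℕ, ∀ E : Finset X, ↑E ⊆ S → (∀ x ∈ E, ∀ y ∈ E, x ≠ y → ε < dist x y) → E.card ≤ N := by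
  obtain ⟨t, ht, hcover⟩ := Metric.totallyBounded_iff.1 hS (ε / 2) (half_pos hε)
  have hcenter : ∀ x ∈ S, ∃ c ∈ t, dist x c < ε / 2 := fun x hx => by
    simpa using hcover hx
  choose! c hct hc using hcenter
  refine ⟨ht.toFinset.card, fun E hES hsep => Finset.card_le_card_of_injOn c ?_ ?_⟩
  · intro x hx
    simpa using hct x (hES hx)
  · intro x hx y hy hcxy
    by_contra hne
    have hx_near := hc x (hES hx)
    have hy_near := hc y (hES hy)
    rw [hcxy] at hx_near
    have := (hsep x hx y hy hne).trans_le (dist_triangle_right x y (c y))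
    linarith

end Separated

section BowenEntropy
variable {Y : Type*} [PseudoMetricSpace Y] {f : Y → Y} {K : Set Y} {n : ℕ} {ε : ℝ}

theorem bddAbove_card_isSep (hf : Continuous f) (hK : IsCompact K) (hε : 0 < ε) :
    BddAbove {m : ℕ | ∃ E : Finset Y, ↑E ⊆ K ∧ IsSep f n ε E ∧ E.card = m} := by
  classical
  let orbit : Y → (Fin n → Y) := fun x i => f^[i] x
  have horbit : Continuous orbit := continuous_pi fun i => hf.iterate i
  obtain ⟨N, hN⟩ := (hK.image horbit).totallyBounded.exists_card_le_of_separated hε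
  refine ⟨N, ?_⟩
  rintro m ⟨E, hEK, hsep, rfl⟩
  have hsep_orbit : ∀ x ∈ E, ∀ y ∈ E, x ≠ y → ε < dist (orbit x) (orbit y) := by
    intro x hx y hy hxy
    obtain ⟨i, hi, hlt⟩ := hsep x hx y hy hxy
    exact hlt.trans_le (dist_le_pi_dist (orbit x) (orbit y) ⟨i, hi⟩)
  have hinj : Set.InjOn orbit E := fun x hx y hy h => by_contra fun hne =>
    (hε.trans (hsep_orbit x hx y hy hne)).ne' (by rw [h, dist_self])
  rw [← Finset.card_image_of_injOn hinj]
  refine hN _ ?_ ?_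
  · rw [Finset.coe_image]
    exact Set.image_mono hEK
  · simp only [Finset.mem_image]
    rintro _ ⟨x, hx, rfl⟩ _ ⟨y, hy, rfl⟩ hne
    exact hsep_orbit x hx y hy (ne_of_apply_ne orbit hne)

theorem IsSep.card_le_sepNum (hf : Continuous f) (hK : IsCompact K) (hε : 0 < ε)
    {E : Finset Y} (hEK : ↑E ⊆ K) (hE : IsSep f n ε E) : E.card ≤ sepNum f K n ε :=
  le_csSup (bddAbove_card_isSep hf hK hε) ⟨E, hEK, hE, rfl⟩

theorem log_le_entBowen_of_pow_le_sepNum (hK : IsCompact K) (hε : 0 < ε) {a : ℝ} (ha : 0 < a)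
    (h : ∀ n, a ^ n ≤ sepNum f K n ε) : (Real.log a : EReal) ≤ entBowen f := by
  have hlimsup : (Real.log a : EReal) ≤
      limsup (fun n : ℕ => ((Real.log (sepNum f K n ε) / n : ℝ) : EReal)) atTop := by
    refine le_limsup_of_frequently_le' (Eventually.frequently ?_)
    filter_upwards [eventually_gt_atTop 0] with n hn
    have hlog : n * Real.log a ≤ Real.log (sepNum f K n ε) := by
      rw [← Real.log_pow]
      exact Real.log_le_log (pow_pos ha n) (h n)
    exact EReal.coe_le_coe_iff.2 <| (le_div_iff₀ (by positivity)).2 (by linarith)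
  exact hlimsup.trans <| le_iSup₂_of_le K hK <| le_iSup₂_of_le ε hε le_rfl

theorem card_pow_le_sepNum_range {A : Type*} [Fintype A] [Nonempty A] (hf : Continuous f)
    {g : (ℕ → A) → Y} (hg : IsCompact (Set.range g)) (hε : 0 < ε)
    (hsep : ∀ t s i, t i ≠ s i → ε < dist (f^[i] (g t)) (f^[i] (g s))) (n : ℕ) :
    Fintype.card A ^ n ≤ sepNum f (Set.range g) n ε := by
  classical
  let pad : (Fin n → A) → ℕ → A := fun v => Function.extend Fin.val v fun _ => Classical.arbitrary A
  have hpad : ∀ v (i : Fin n), pad v i = v i := fun v i => Fin.val_injective.extend_apply v _ i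
  have hsep_pad : ∀ v w, v ≠ w → ∃ i < n, ε < dist (f^[i] (g (pad v))) (f^[i] (g (pad w))) := by
    intro v w hvw
    obtain ⟨i, hi⟩ := Function.ne_iff.1 hvw
    exact ⟨i, i.isLt, hsep _ _ _ (by rwa [hpad, hpad])⟩
  have hinj : Function.Injective (g ∘ pad) := fun v w h => by_contra fun hne => by
    obtain ⟨i, -, hlt⟩ := hsep_pad v w hne
    have hvw : g (pad v) = g (pad w) := h
    exact (hε.trans hlt).ne' (by rw [hvw, dist_self])
  have hE : IsSep f n ε (Finset.univ.image (g ∘ pad)) := by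
    simp only [IsSep, Finset.mem_image, Finset.mem_univ, true_and]
    rintro _ ⟨v, rfl⟩ _ ⟨w, rfl⟩ hne
    exact hsep_pad v w (ne_of_apply_ne _ hne)
  have hEK : ↑(Finset.univ.image (g ∘ pad)) ⊆ Set.range g := by
    rw [Finset.coe_image]
    exact (Set.image_subset_range _ _).trans (Set.range_comp_subset_range pad g)
  simpa [Finset.card_image_of_injective _ hinj] using hE.card_le_sepNum hf hg hε hEK

theorem log_card_le_entBowen {A : Type*} [Fintype A] [Nonempty A] (hf : Continuous f)
    {g : (ℕ → A) → Y} (hg : IsCompact (Set.range g)) (hε : 0 < ε)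
    (hsep : ∀ t s i, t i ≠ s i → ε < dist (f^[i] (g t)) (f^[i] (g s))) :
    (Real.log (Fintype.card A) : EReal) ≤ entBowen f :=
  log_le_entBowen_of_pow_le_sepNum hg hε (by exact_mod_cast Fintype.card_pos) fun n => by
    exact_mod_cast card_pow_le_sepNum_range hf hg hε hsep n

end BowenEntropy

theorem EReal.eq_top_of_forall_log_le {x : EReal} (h : ∀ m : ℕ, (Real.log (m + 1) : EReal) ≤ x) :
    x = ⊤ := by
  refine (EReal.eq_top_iff_forall_lt x).2 fun y => ?_
  obtain ⟨m, hm⟩ := exists_nat_gt (Real.exp y)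
  have hy : y < Real.log (m + 1) := (Real.lt_log_iff_exp_lt (by positivity)).2 (by linarith)
  exact (EReal.coe_lt_coe_iff.2 hy).trans_le (h m)

section DigitVector
variable {p : ℝ≥0∞} [Fact (1 ≤ p)] {m : ℕ} {w : ℕ → ℂ}

variable (p) in
noncomputable def digitVector (w : ℕ → ℂ) (t : ℕ → Fin m) : lp (fun _ : ℕ => ℂ) p :=
  ∑' i, lp.single (E := fun _ : ℕ => ℂ) p i (((t i : ℕ) : ℂ) * w i)

theorem norm_single_digit_le (i : ℕ) (t : ℕ → Fin m) :
    ‖lp.single (E := fun _ : ℕ => ℂ) p i (((t i : ℕ) : ℂ) * w i)‖ ≤ m * ‖w i‖ := by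
  rw [lp.norm_single (zero_lt_one.trans_le Fact.out), norm_mul, Complex.norm_natCast]
  gcongr
  exact (t i).isLt.le

theorem digitVector_apply (hw : Summable fun i => ‖w i‖) (t : ℕ → Fin m) (j : ℕ) :
    digitVector p w t j = (t j : ℕ) * w j := by
  have hsum : Summable fun i => lp.single (E := fun _ : ℕ => ℂ) p i (((t i : ℕ) : ℂ) * w i) :=
    .of_norm_bounded (hw.mul_left (m : ℝ)) (norm_single_digit_le · t)
  change lp.evalCLM ℂ _ p j (digitVector p w t) = _
  rw [digitVector, ContinuousLinearMap.map_tsum _ hsum, tsum_eq_single j]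
  · exact lp.single_apply_self p j _
  · exact fun i hij => lp.single_apply_ne p i _ (Ne.symm hij)

theorem continuous_digitVector (hw : Summable fun i => ‖w i‖) :
    Continuous (digitVector p w : (ℕ → Fin m) → lp (fun _ : ℕ => ℂ) p) :=
  continuous_tsum (fun i => (lp.isometry_single i).continuous.comp
    ((continuous_of_discreteTopology (f := fun a : Fin m => ((a : ℕ) : ℂ) * w i)).comp
      (continuous_apply i))) (hw.mul_left (m : ℝ))
    norm_single_digit_le

end DigitVector

theorem summable_norm_inv_pow {𝕜 : Type*} [NormedDivisionRing 𝕜] {a : 𝕜} (ha : 1 < ‖a‖) :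
    Summable fun k : ℕ => ‖a⁻¹ ^ k‖ := by
  simpa only [norm_pow, norm_inv] using
    summable_geometric_of_lt_one (inv_nonneg.2 (norm_nonneg a)) (inv_lt_one_of_one_lt₀ ha)

section Rolewicz
variable {p : ℝ≥0∞} {α : ℂ} {T : lp (fun _ : ℕ => ℂ) p → lp (fun _ : ℕ => ℂ) p}

theorem iterate_apply_of_shift (hT : ∀ x n, (T x : ℕ → ℂ) n = α * x (n + 1)) (i : ℕ)
    (x : lp (fun _ : ℕ => ℂ) p) (j : ℕ) : T^[i] x j = α ^ i * x (j + i) := by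
  induction i generalizing x with
  | zero => simp
  | succ i ih =>
    rw [Function.iterate_succ_apply, ih, hT, pow_succ, mul_assoc, ← add_assoc]

variable [Fact (1 ≤ p)]

theorem one_le_dist_iterate_digitVector (hα : 1 < ‖α‖)
    (hT : ∀ x n, (T x : ℕ → ℂ) n = α * x (n + 1)) {m : ℕ} {t s : ℕ → Fin m} {i : ℕ}
    (hts : t i ≠ s i) :
    1 ≤ dist (T^[i] (digitVector p (α⁻¹ ^ ·) t)) (T^[i] (digitVector p (α⁻¹ ^ ·) s)) := by
  have hα0 : α ≠ 0 := norm_pos_iff.1 (one_pos.trans hα)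
  have hcoord : ∀ u : ℕ → Fin m, T^[i] (digitVector p (α⁻¹ ^ ·) u) 0 = (u i : ℕ) := fun u => by
    rw [iterate_apply_of_shift hT, zero_add, digitVector_apply (summable_norm_inv_pow hα),
      mul_left_comm, ← mul_pow, mul_inv_cancel₀ hα0, one_pow, mul_one]
  calc (1 : ℝ) ≤ dist ((t i : ℕ) : ℂ) ((s i : ℕ) : ℂ) := by
        rw [← Complex.ofReal_natCast, ← Complex.ofReal_natCast, Complex.isometry_ofReal.dist_eq,
          Nat.dist_cast_real]
        exact Nat.pairwise_one_le_dist (Fin.val_ne_of_ne hts)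
    _ = dist (T^[i] (digitVector p (α⁻¹ ^ ·) t) 0) (T^[i] (digitVector p (α⁻¹ ^ ·) s) 0) := by
        rw [hcoord, hcoord]
    _ ≤ dist (T^[i] (digitVector p (α⁻¹ ^ ·) t)) (T^[i] (digitVector p (α⁻¹ ^ ·) s)) := by
        simpa using (lp.lipschitzWith_one_eval p 0).dist_le_mul _ _

end Rolewicz

theorem rolewicz_infinite_entropy_general
    (p : ℝ≥0∞) [Fact (1 ≤ p)] (α : ℂ) (hα : 1 < ‖α‖)
    (T : lp (fun _ : ℕ => ℂ) p →L[ℂ] lp (fun _ : ℕ => ℂ) p)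
    (hT : ∀ (x : lp (fun _ : ℕ => ℂ) p) (n : ℕ), (T x : ℕ → ℂ) n = α * (x : ℕ → ℂ) (n + 1)) :
    entBowen (fun x => T x) = ⊤ := by
  refine EReal.eq_top_of_forall_log_le fun m => ?_
  have hK := isCompact_range (continuous_digitVector (p := p) (m := m + 1)
    (summable_norm_inv_pow hα))
  have hsep : ∀ (t s : ℕ → Fin (m + 1)) i, t i ≠ s i →
      1 / 2 < dist (T^[i] (digitVector p (α⁻¹ ^ ·) t)) (T^[i] (digitVector p (α⁻¹ ^ ·) s)) :=
    fun t s i hts => one_half_lt_one.trans_le (one_le_dist_iterate_digitVector hα hT hts)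
  simpa using log_card_le_entBowen T.continuous hK one_half_pos hsep

theorem rolewicz_infinite_entropy
    (p : ℝ≥0∞) [Fact (1 ≤ p)] (hp : p ≠ ⊤) (α : ℂ) (hα : 1 < ‖α‖)
    (T : lp (fun _ : ℕ => ℂ) p →L[ℂ] lp (fun _ : ℕ => ℂ) p)
    (hT : ∀ (x : lp (fun _ : ℕ => ℂ) p) (n : ℕ), (T x : ℕ → ℂ) n = α * (x : ℕ → ℂ) (n + 1)) :
    entBowen (fun x => T x) = ⊤ :=
  rolewicz_infinite_entropy_general p α hα T hT
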